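/- Let X_1, X_2, … be a sequence of (possibly dependent) real-valued random variables such that ‖X_k‖_{Ψ_{α,L}} < ∞ for all k ≥ 1, for some α, L > 0. Then ‖ sup_{k≥1} |X_k| / (√2 · ‖X_k‖_{Ψ_{α,L}} · Ψ_{α,S(α)·L}^{-1}(k)) ‖_{Ψ_{α, c(α)·M(α)·L}} ≤ 2.5·Q_α, where M(α) := max{1, 2^{(1−α)/α}}, S(α) := 2^{1/α}·M(α)/2, c(α) := 3^{1/α}/√3, and Q_α := 2e·(4/α)^{1/α} if α < 1, Q_α := 1 if α ≥ 1. -/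

import Mathlib

/-!
Write `Y` for the supremum and `η = 2.5 Q_α`. By the layer-cake formula,
`E Ψ(Y/η) = ∫₀^∞ P(Ψ(Y/η) > t) dt`, and the integrand is at most `1` for `t ≤ 1/2`.
For `t > 1/2` the event `Ψ(Y/η) > t` forces `Y > η Ψ⁻¹(t)`, hence
`|X_k| > ‖X_k‖ · √2 Ψ_{α,SL}⁻¹(k) · η Ψ_{α,cML}⁻¹(t)` for some `k`. The scalar inequality
`Ψ_{α,L}⁻¹((1+t)²(1+k)² - 1) ≤ √2 Ψ_{α,SL}⁻¹(k) · η Ψ_{α,cML}⁻¹(t)`, which comes from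
`log((1+t)²(1+k)²) = 2 (log(1+t) + log(1+k))` and `(x+y)^p ≤ M (x^p + y^p)`, lets Markov's
inequality for `Ψ_{α,L}(|X_k|/‖X_k‖)` bound the `k`-th event by `1/((1+t)²(1+k)² - 1)`.
Summing over `k` gives at most `(3/4)(1+t)⁻²`, and
`E Ψ(Y/η) ≤ 1/2 + (3/4) ∫_{1/2}^∞ (1+t)⁻² dt = 1`.
-/

open MeasureTheory ProbabilityTheory ENNReal

noncomputable section

/-- The `g`-Orlicz norm of a real-valued random variable:
`‖X‖_g := inf {η > 0 : E[g(|X|/η)] ≤ 1}`, with `inf ∅ = ∞`. -/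
def orliczNorm {Ω : Type*} [MeasurableSpace Ω] (μ : Measure Ω) (g : ℝ → ℝ) (X : Ω → ℝ) : ℝ≥0∞ :=
  sInf (ENNReal.ofReal '' {η : ℝ | 0 < η ∧ ∫⁻ ω, ENNReal.ofReal (g (|X ω| / η)) ∂μ ≤ 1})

/-- The inverse of the Generalized Bernstein-Orlicz function:
`Ψ_{α,L}⁻¹(t) = √(log(1+t)) + L (log(1+t))^{1/α}`. -/
def PsiInv (α L t : ℝ) : ℝ :=
  Real.sqrt (Real.log (1 + t)) + L * Real.log (1 + t) ^ (1 / α)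

/-- The Generalized Bernstein-Orlicz function `Ψ_{α,L}`: the non-decreasing function with
`Ψ_{α,L}(0) = 0` whose inverse is `PsiInv α L`. -/
def Psi (α L x : ℝ) : ℝ := sInf {t : ℝ | 0 ≤ t ∧ x ≤ PsiInv α L t}

/-- The Generalized Bernstein-Orlicz (GBO) norm `‖X‖_{Ψ_{α,L}}`. -/
def gboNorm {Ω : Type*} [MeasurableSpace Ω] (μ : Measure Ω) (α L : ℝ) (X : Ω → ℝ) : ℝ≥0∞ :=
  orliczNorm μ (Psi α L) X

/-- The `ψ_α`-Orlicz norm `‖X‖_{ψ_α} := inf {η > 0 : E[exp((|X|/η)^α)] ≤ 2}`,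
with `inf ∅ = ∞`. -/
def psiNorm {Ω : Type*} [MeasurableSpace Ω] (μ : Measure Ω) (α : ℝ) (X : Ω → ℝ) : ℝ≥0∞ :=
  sInf (ENNReal.ofReal ''
    {η : ℝ | 0 < η ∧ ∫⁻ ω, ENNReal.ofReal (Real.exp ((|X ω| / η) ^ α)) ∂μ ≤ 2})

end

open Set Filter Topology

section Psi

variable {α L : ℝ}

lemma PsiInv_pos (hL : 0 ≤ L) {t : ℝ} (ht : 0 < t) : 0 < PsiInv α L t :=
  add_pos_of_pos_of_nonneg (Real.sqrt_pos.mpr (Real.log_pos (by linarith)))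
    (mul_nonneg hL (Real.rpow_nonneg (Real.log_nonneg (by linarith)) _))

lemma PsiInv_monotoneOn (hα : 0 ≤ α) (hL : 0 ≤ L) : MonotoneOn (PsiInv α L) (Ici 0) := by
  intro s (hs : 0 ≤ s) t _ hst
  have hlog : Real.log (1 + s) ≤ Real.log (1 + t) := Real.log_le_log (by linarith) (by linarith)
  exact add_le_add (Real.sqrt_le_sqrt hlog) (mul_le_mul_of_nonneg_left
    (Real.rpow_le_rpow (Real.log_nonneg (by linarith)) hlog (by positivity)) hL)

lemma exists_le_PsiInv (hL : 0 ≤ L) (x : ℝ) : ∃ t, 0 ≤ t ∧ x ≤ PsiInv α L t := by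
  set m := max x 0
  -- at `t = exp(m²) - 1` the term `√(log(1+t))` alone equals `m`
  refine ⟨Real.exp (m ^ 2) - 1, by linarith [Real.one_le_exp (sq_nonneg m)], ?_⟩
  rw [PsiInv, add_sub_cancel, Real.log_exp, Real.sqrt_sq (le_max_right x 0)]
  exact le_add_of_le_of_nonneg (le_max_left x 0) (mul_nonneg hL (Real.rpow_nonneg (sq_nonneg m) _))

lemma Psi_nonneg (x : ℝ) : 0 ≤ Psi α L x :=
  Real.sInf_nonneg fun _ h => h.1

lemma Psi_le {t x : ℝ} (ht : 0 ≤ t) (hx : x ≤ PsiInv α L t) : Psi α L x ≤ t :=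
  csInf_le ⟨0, fun _ h => h.1⟩ ⟨ht, hx⟩

lemma le_Psi (hα : 0 ≤ α) (hL : 0 ≤ L) {u x : ℝ} (hx : PsiInv α L u < x) : u ≤ Psi α L x := by
  refine le_csInf (exists_le_PsiInv hL x) fun b ⟨hb, hxb⟩ => ?_
  by_contra! hbu
  exact (hxb.trans (PsiInv_monotoneOn hα hL hb (hb.trans hbu.le) hbu.le)).not_gt hx

lemma monotone_Psi (hL : 0 ≤ L) : Monotone (Psi α L) := fun _ y hxy =>
  csInf_le_csInf ⟨0, fun _ h => h.1⟩ (exists_le_PsiInv hL y) fun _ ⟨ht, hyt⟩ => ⟨ht, hxy.trans hyt⟩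

lemma setOf_lt_Psi_div_subset {Ω : Type*} {α L η t : ℝ} {Y : Ω → ℝ} (hη : 0 < η) (ht : 0 ≤ t) :
    {ω | t < Psi α L (Y ω / η)} ⊆ {ω | η * PsiInv α L t < Y ω} := fun ω hω => by
  by_contra hle
  exact (Psi_le ht ((div_le_iff₀' hη).2 (not_lt.1 hle))).not_gt hω

end Psi

section Orlicz

variable {Ω : Type*} [MeasurableSpace Ω] {μ : Measure Ω} {g : ℝ → ℝ} {X : Ω → ℝ}

lemma orliczNorm_le_ofReal {η : ℝ} (hη : 0 < η)
    (h : ∫⁻ ω, ENNReal.ofReal (g (|X ω| / η)) ∂μ ≤ 1) : orliczNorm μ g X ≤ ENNReal.ofReal η :=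
  sInf_le ⟨η, ⟨hη, h⟩, rfl⟩

lemma lintegral_le_one_of_orliczNorm_lt (hg : Monotone g) {η : ℝ}
    (h : orliczNorm μ g X < ENNReal.ofReal η) :
    ∫⁻ ω, ENNReal.ofReal (g (|X ω| / η)) ∂μ ≤ 1 := by
  obtain ⟨_, ⟨η', ⟨hη', hint⟩, rfl⟩, hlt⟩ := sInf_lt_iff.mp h
  refine le_trans (lintegral_mono fun ω => ENNReal.ofReal_le_ofReal (hg ?_)) hint
  exact div_le_div_of_nonneg_left (abs_nonneg _) hη' (ENNReal.ofReal_lt_ofReal_iff'.mp hlt).1.le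

lemma measure_mul_lt_abs_le_inv (hg : Monotone g) (hX : Measurable X) {η A u : ℝ} (hη : 0 < η)
    (hint : ∫⁻ ω, ENNReal.ofReal (g (|X ω| / η)) ∂μ ≤ 1) (hu : ∀ x, A < x → u ≤ g x) :
    μ {ω | η * A < |X ω|} ≤ (ENNReal.ofReal u)⁻¹ := by
  have hsub : {ω | η * A < |X ω|} ⊆ {ω | ENNReal.ofReal u ≤ ENNReal.ofReal (g (|X ω| / η))} :=
    fun ω hω => ENNReal.ofReal_le_ofReal (hu _ ((lt_div_iff₀' hη).2 hω))
  have hmeas : AEMeasurable (fun ω => ENNReal.ofReal (g (|X ω| / η))) μ :=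
    (ENNReal.measurable_ofReal.comp (hg.measurable.comp (hX.abs.div_const η))).aemeasurable
  rw [ENNReal.le_inv_iff_mul_le, mul_comm]
  calc ENNReal.ofReal u * μ {ω | η * A < |X ω|}
      ≤ ENNReal.ofReal u * μ {ω | ENNReal.ofReal u ≤ ENNReal.ofReal (g (|X ω| / η))} := by
        gcongr
    _ ≤ ∫⁻ ω, ENNReal.ofReal (g (|X ω| / η)) ∂μ := mul_meas_ge_le_lintegral₀ hmeas _
    _ ≤ 1 := hint

lemma measure_lt_le_of_forall_lt {f : Ω → ℝ} {a : ℝ} {c : ℝ≥0∞}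
    (h : ∀ b, a < b → μ {ω | b < f ω} ≤ c) : μ {ω | a < f ω} ≤ c := by
  have hunion : {ω | a < f ω} = ⋃ n : ℕ, {ω | a + 1 / (n + 1) < f ω} := by
    ext ω
    rw [mem_iUnion]
    refine ⟨fun (hω : a < f ω) => ?_,
      fun ⟨n, hn⟩ => (lt_add_of_pos_right a (by positivity)).trans hn⟩
    obtain ⟨n, hn⟩ := exists_nat_one_div_lt (sub_pos.2 hω)
    exact ⟨n, show a + 1 / ((n : ℝ) + 1) < f ω by linarith⟩
  have hmono : Monotone fun n : ℕ => {ω | a + 1 / (n + 1) < f ω} := fun m n hmn ω hω => by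
    have : a + 1 / ((n : ℝ) + 1) ≤ a + 1 / ((m : ℝ) + 1) := by gcongr
    exact this.trans_lt hω
  rw [hunion, hmono.measure_iUnion]
  exact iSup_le fun n => h _ (lt_add_of_pos_right a (by positivity))

lemma measure_lt_abs_div_orliczNorm_le (hg : Monotone g) (hX : Measurable X) {A u : ℝ}
    (hA : 0 < A) (hu : ∀ x, A < x → u ≤ g x) :
    μ {ω | A < |X ω| / (orliczNorm μ g X).toReal} ≤ (ENNReal.ofReal u)⁻¹ := by
  set N := (orliczNorm μ g X).toReal
  rcases (show 0 ≤ N from ENNReal.toReal_nonneg).eq_or_lt with hN | hN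
  · -- a norm `0` or `∞` has `toReal = 0`, and `|X| / 0 = 0`
    simp [← hN, hA.not_gt]
  have hfin : orliczNorm μ g X ≠ ⊤ := (ENNReal.toReal_pos_iff.mp hN).2.ne
  have hset : {ω | A < |X ω| / N} = {ω | N * A < |X ω|} := by
    ext ω
    show A < |X ω| / N ↔ N * A < |X ω|
    rw [lt_div_iff₀ hN, mul_comm]
  rw [hset]
  refine measure_lt_le_of_forall_lt fun b hb => ?_
  have hη : N < b / A := by rwa [lt_div_iff₀ hA]
  have hlt : orliczNorm μ g X < ENNReal.ofReal (b / A) := by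
    rw [← ENNReal.ofReal_toReal hfin]
    exact (ENNReal.ofReal_lt_ofReal_iff (hN.trans hη)).2 hη
  simpa only [div_mul_cancel₀ _ hA.ne'] using
    measure_mul_lt_abs_le_inv hg hX (hN.trans hη) (lintegral_le_one_of_orliczNorm_lt hg hlt) hu

end Orlicz

section Scalar

lemma add_rpow_le_max_mul {x y p : ℝ} (hx : 0 ≤ x) (hy : 0 ≤ y) (hp : 0 ≤ p) :
    (x + y) ^ p ≤ max 1 (2 ^ (p - 1)) * (x ^ p + y ^ p) := by
  rcases le_total p 1 with hp1 | hp1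
  · exact (Real.rpow_add_le_add_rpow hx hy hp hp1).trans
      (le_mul_of_one_le_left (by positivity) (le_max_left _ _))
  · lift x to NNReal using hx
    lift y to NNReal using hy
    calc ((x : ℝ) + y) ^ p ≤ 2 ^ (p - 1) * ((x : ℝ) ^ p + (y : ℝ) ^ p) := by
          exact_mod_cast NNReal.rpow_add_le_mul_rpow_add_rpow x y hp1
      _ ≤ _ := by gcongr; exact le_max_right _ _

lemma sqrt_two_mul_add_le {Q a b : ℝ} (hQ : 1 ≤ Q) (ha : 1 / 3 ≤ a) (hb : 1 / 2 ≤ b) :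
    √(2 * (a + b)) ≤ √2 * √b * (2.5 * Q * √a) := by
  have ha0 : 0 ≤ a := by linarith
  have hb0 : 0 ≤ b := by linarith
  -- `a + b ≤ 5ab` because `a ≥ 1/3` and `b ≥ 1/2`
  have hab : a + b ≤ (2.5 * Q) ^ 2 * (a * b) := by
    nlinarith [mul_nonneg ha0 (by linarith : 0 ≤ 2 * b - 1),
      mul_nonneg hb0 (by linarith : 0 ≤ 3 * a - 1),
      mul_nonneg (mul_nonneg ha0 hb0) (by nlinarith : 0 ≤ (2.5 * Q) ^ 2 - 5)]
  calc √(2 * (a + b)) ≤ √(2 * ((2.5 * Q) ^ 2 * (a * b))) := Real.sqrt_le_sqrt (by linarith)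
    _ = √2 * √b * (2.5 * Q * √a) := by
      rw [Real.sqrt_mul zero_le_two, Real.sqrt_mul (by positivity), Real.sqrt_sq (by linarith),
        Real.sqrt_mul ha0]
      ring

lemma sqrt_add_rpow_two_mul_add_le {p L M Q a b : ℝ} (hp : 0 ≤ p) (hL : 0 ≤ L)
    (hM : max 1 (2 ^ (p - 1)) ≤ M) (hQ : 1 ≤ Q) (ha : 1 / 3 ≤ a) (hb : 1 / 2 ≤ b) :
    √(2 * (a + b)) + L * (2 * (a + b)) ^ p ≤
      √2 * (√b + 2 ^ p * M / 2 * L * b ^ p) * (2.5 * Q * (√a + 3 ^ p / √3 * M * L * a ^ p)) := by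
  have ha0 : 0 ≤ a := by linarith
  have hb0 : 0 ≤ b := by linarith
  have hM0 : 0 ≤ M := zero_le_one.trans ((le_max_left _ _).trans hM)
  have hsplit : (2 * (a + b)) ^ p ≤ 2 ^ p * M * (a ^ p + b ^ p) := by
    rw [Real.mul_rpow zero_le_two (by linarith), mul_assoc]
    gcongr
    exact (add_rpow_le_max_mul ha0 hb0 hp).trans (by gcongr)
  have ha_term : 2 ^ p * M * L * a ^ p ≤ √2 * √b * (2.5 * Q * (3 ^ p / √3 * M * L * a ^ p)) := by
    have hc : 1 ≤ √2 * √b * (2.5 * Q) / √3 := by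
      have hsb : 1 ≤ √2 * √b := by
        rw [← Real.sqrt_mul zero_le_two, Real.le_sqrt zero_le_one (by positivity)]
        linarith
      rw [le_div_iff₀ (by positivity), one_mul]
      calc √3 ≤ 2.5 := Real.sqrt_le_iff.2 ⟨by norm_num, by norm_num⟩
        _ ≤ √2 * √b * (2.5 * Q) := by nlinarith
    calc 2 ^ p * M * L * a ^ p ≤ 1 * 3 ^ p * (M * L * a ^ p) := by
          rw [one_mul, ← mul_assoc, ← mul_assoc]
          gcongr
          norm_num
      _ ≤ √2 * √b * (2.5 * Q) / √3 * 3 ^ p * (M * L * a ^ p) := by gcongr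
      _ = _ := by ring
  have hb_term : 2 ^ p * M * L * b ^ p ≤ √2 * (2 ^ p * M / 2 * L * b ^ p) * (2.5 * Q * √a) := by
    have hc : 2 ≤ √2 * (2.5 * Q * √a) := by
      have hsa : 4 / 5 ≤ √2 * √a := by
        rw [← Real.sqrt_mul zero_le_two, Real.le_sqrt (by norm_num) (by positivity)]
        linarith
      nlinarith
    calc 2 ^ p * M * L * b ^ p = 2 * (2 ^ p * M / 2 * L * b ^ p) := by ring
      _ ≤ √2 * (2.5 * Q * √a) * (2 ^ p * M / 2 * L * b ^ p) := by gcongr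
      _ = _ := by ring
  have hcross :
      0 ≤ √2 * (2 ^ p * M / 2 * L * b ^ p) * (2.5 * Q * (3 ^ p / √3 * M * L * a ^ p)) := by
    positivity
  linarith [mul_le_mul_of_nonneg_left hsplit hL, sqrt_two_mul_add_le hQ ha hb]

lemma PsiInv_sq_mul_sq_sub_one_le {α L Q t k : ℝ} (hα : 0 < α) (hL : 0 ≤ L) (hQ : 1 ≤ Q)
    (ht : 1 / 2 ≤ t) (hk : 1 ≤ k) :
    PsiInv α L ((1 + t) ^ 2 * (1 + k) ^ 2 - 1) ≤
      √2 * PsiInv α ((2 : ℝ) ^ (1 / α) * max 1 ((2 : ℝ) ^ ((1 - α) / α)) / 2 * L) k *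
        (2.5 * Q * PsiInv α ((3 : ℝ) ^ (1 / α) / √3 * max 1 ((2 : ℝ) ^ ((1 - α) / α)) * L) t) := by
  have hlog : Real.log (1 + ((1 + t) ^ 2 * (1 + k) ^ 2 - 1)) =
      2 * (Real.log (1 + t) + Real.log (1 + k)) := by
    rw [add_sub_cancel, ← mul_pow, Real.log_pow, Real.log_mul (by positivity) (by positivity)]
    push_cast
    ring
  have hlog_t : 1 / 3 ≤ Real.log (1 + t) := by
    refine le_trans ?_ (Real.one_sub_inv_le_log_of_pos (by linarith))
    have : (1 + t)⁻¹ ≤ 2 / 3 := by rw [inv_le_comm₀ (by linarith) (by norm_num)]; linarith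
    linarith
  have hlog_k : 1 / 2 ≤ Real.log (1 + k) := by
    refine le_trans ?_ (Real.one_sub_inv_le_log_of_pos (by linarith))
    have : (1 + k)⁻¹ ≤ 1 / 2 := by rw [inv_le_comm₀ (by linarith) (by norm_num)]; linarith
    linarith
  have hM : max 1 ((2 : ℝ) ^ (1 / α - 1)) ≤ max 1 ((2 : ℝ) ^ ((1 - α) / α)) := by
    rw [sub_div, div_self hα.ne']
  rw [PsiInv, PsiInv, PsiInv, hlog]
  exact sqrt_add_rpow_two_mul_add_le (by positivity) hL hM hQ hlog_t hlog_k

end Scalar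

section Series

lemma sum_range_inv_add_one_mul_add_three_le (n : ℕ) :
    ∑ i ∈ Finset.range n, (((i : ℝ) + 1) * (i + 3))⁻¹ ≤ 3 / 4 := by
  have htelescope : ∀ m : ℕ, ∑ i ∈ Finset.range m, (((i : ℝ) + 1) * (i + 3))⁻¹ =
      3 / 4 - (1 / ((m : ℝ) + 1) + 1 / (m + 2)) / 2 := by
    intro m
    induction m with
    | zero => norm_num
    | succ m ih =>
      rw [Finset.sum_range_succ, ih]
      push_cast
      field_simp
      ring
  have : 0 ≤ 1 / ((n : ℝ) + 1) + 1 / (n + 2) := by positivity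
  linarith [htelescope n]

lemma tsum_inv_ofReal_mul_sq_sub_one_le {c : ℝ} (hc : 1 ≤ c) :
    ∑' k : {k : ℕ // 1 ≤ k}, (ENNReal.ofReal (c * (1 + k) ^ 2 - 1))⁻¹ ≤
      ENNReal.ofReal (3 / 4 * c⁻¹) := by
  have hterm : ∀ n : ℕ, (ENNReal.ofReal (c * (1 + ((n + 1 : ℕ) : ℝ)) ^ 2 - 1))⁻¹ ≤
      ENNReal.ofReal c⁻¹ * ENNReal.ofReal (((n : ℝ) + 1) * (n + 3))⁻¹ := by
    intro n
    have hsq : 1 < (1 + ((n + 1 : ℕ) : ℝ)) ^ 2 := by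
      push_cast
      nlinarith [n.cast_nonneg (α := ℝ)]
    rw [← ENNReal.ofReal_mul (by positivity), ← mul_inv,
      ← ENNReal.ofReal_inv_of_pos (by nlinarith)]
    refine ENNReal.ofReal_le_ofReal (inv_anti₀ (by positivity) ?_)
    push_cast
    nlinarith
  -- `{k : ℕ // 1 ≤ k}` is definitionally `ℕ+`
  calc ∑' k : {k : ℕ // 1 ≤ k}, (ENNReal.ofReal (c * (1 + k) ^ 2 - 1))⁻¹
      = ∑' n : ℕ, (ENNReal.ofReal (c * (1 + ((n + 1 : ℕ) : ℝ)) ^ 2 - 1))⁻¹ :=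
        tsum_pnat_eq_tsum_succ (f := fun k : ℕ => (ENNReal.ofReal (c * (1 + k) ^ 2 - 1))⁻¹)
    _ ≤ ∑' n : ℕ, ENNReal.ofReal c⁻¹ * ENNReal.ofReal (((n : ℝ) + 1) * (n + 3))⁻¹ :=
        ENNReal.tsum_le_tsum hterm
    _ = ENNReal.ofReal c⁻¹ * ∑' n : ℕ, ENNReal.ofReal (((n : ℝ) + 1) * (n + 3))⁻¹ :=
        ENNReal.tsum_mul_left
    _ ≤ ENNReal.ofReal c⁻¹ * ENNReal.ofReal (3 / 4) := by
        gcongr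
        refine ENNReal.tsum_le_of_sum_range_le fun n => ?_
        rw [← ENNReal.ofReal_sum_of_nonneg fun i _ => by positivity]
        exact ENNReal.ofReal_le_ofReal (sum_range_inv_add_one_mul_add_three_le n)
    _ = ENNReal.ofReal (3 / 4 * c⁻¹) := by
        rw [← ENNReal.ofReal_mul (by positivity), mul_comm]

lemma lintegral_Ioi_inv_one_add_sq {a : ℝ} (ha : -1 < a) :
    ∫⁻ t in Ioi a, ENNReal.ofReal ((1 + t) ^ 2)⁻¹ = ENNReal.ofReal (1 + a)⁻¹ := by
  have hderiv : ∀ x ∈ Ici a, HasDerivAt (fun t => -(1 + t)⁻¹) ((1 + x) ^ 2)⁻¹ x := by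
    intro x hx
    have hx : 1 + x ≠ 0 := by linarith [mem_Ici.mp hx]
    exact (((hasDerivAt_id' x).const_add 1).inv hx).neg.congr_deriv
      (by rw [neg_div, neg_neg, one_div])
  have hnonneg : ∀ x ∈ Ioi a, 0 ≤ ((1 + x) ^ 2)⁻¹ := fun x _ => by positivity
  have hlim : Tendsto (fun t : ℝ => -(1 + t)⁻¹) atTop (𝓝 0) := by
    simpa using
      (tendsto_inv_atTop_zero.comp (tendsto_atTop_add_const_left _ (1 : ℝ) tendsto_id)).neg
  rw [← ofReal_integral_eq_lintegral_ofReal (integrableOn_Ioi_deriv_of_nonneg' hderiv hnonneg hlim)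
    (ae_of_all _ fun x => by positivity), integral_Ioi_of_hasDerivAt_of_nonneg' hderiv hnonneg hlim]
  simp

end Series

section Maximal

variable {Ω : Type*} [MeasurableSpace Ω] {μ : Measure Ω}

lemma lintegral_ofReal_le_of_meas_lt_le [IsZeroOrProbabilityMeasure μ] {f : Ω → ℝ} (hf : 0 ≤ f)
    (hfm : Measurable f) {a c : ℝ} (ha : 0 ≤ a) (hc : 0 ≤ c)
    (htail : ∀ t, a < t → μ {ω | t < f ω} ≤ ENNReal.ofReal (c * ((1 + t) ^ 2)⁻¹)) :
    ∫⁻ ω, ENNReal.ofReal (f ω) ∂μ ≤ ENNReal.ofReal (a + c * (1 + a)⁻¹) := by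
  rw [lintegral_eq_lintegral_meas_lt μ (ae_of_all _ hf) hfm.aemeasurable,
    ← Ioc_union_Ioi_eq_Ioi ha, lintegral_union measurableSet_Ioi Ioc_disjoint_Ioi_same,
    ENNReal.ofReal_add ha (by positivity)]
  have hbody : ∫⁻ t in Ioc 0 a, μ {ω | t < f ω} ≤ ENNReal.ofReal a :=
    calc _ ≤ ∫⁻ _ in Ioc 0 a, 1 := lintegral_mono fun _ => prob_le_one
      _ = ENNReal.ofReal a := by simp [Real.volume_Ioc]
  have htail_int : ∫⁻ t in Ioi a, μ {ω | t < f ω} ≤ ENNReal.ofReal (c * (1 + a)⁻¹) :=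
    calc _ ≤ ∫⁻ t in Ioi a, ENNReal.ofReal c * ENNReal.ofReal ((1 + t) ^ 2)⁻¹ :=
          setLIntegral_mono' measurableSet_Ioi fun t ht =>
            (htail t ht).trans_eq (ENNReal.ofReal_mul hc)
      _ = _ := by
        rw [lintegral_const_mul' _ _ ofReal_ne_top, lintegral_Ioi_inv_one_add_sq (by linarith),
          ← ENNReal.ofReal_mul hc]
  exact add_le_add hbody htail_int

lemma measure_lt_abs_div_gboNorm_div_le {α L D s u : ℝ} (hα : 0 ≤ α) (hL : 0 ≤ L) {X : Ω → ℝ}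
    (hX : Measurable X) (hD : 0 < D) (hs : 0 < s) (hu : PsiInv α L u ≤ D * s) :
    μ {ω | s < |X ω| / (gboNorm μ α L X).toReal / D} ≤ (ENNReal.ofReal u)⁻¹ := by
  have hset : {ω | s < |X ω| / (gboNorm μ α L X).toReal / D} =
      {ω | D * s < |X ω| / (gboNorm μ α L X).toReal} := by
    ext ω
    show s < _ / D ↔ D * s < _
    rw [lt_div_iff₀' hD]
  rw [hset]
  exact measure_lt_abs_div_orliczNorm_le (monotone_Psi hL) hX (mul_pos hD hs)
    fun x hx => le_Psi hα hL (hu.trans_lt hx)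

lemma gboNorm_iSup_div_le [IsZeroOrProbabilityMeasure μ] {α L LS LO η : ℝ} (hα : 0 ≤ α)
    (hL : 0 ≤ L) (hLS : 0 ≤ LS) (hLO : 0 ≤ LO) (hη : 0 < η) (X : ℕ → Ω → ℝ)
    (hX : ∀ k, Measurable (X k))
    (hkey : ∀ t k : ℝ, 1 / 2 < t → 1 ≤ k →
      PsiInv α L ((1 + t) ^ 2 * (1 + k) ^ 2 - 1) ≤ √2 * PsiInv α LS k * (η * PsiInv α LO t)) :
    gboNorm μ α LO (fun ω => ⨆ k : {k : ℕ // 1 ≤ k},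
        |X k ω| / (√2 * (gboNorm μ α L (X k)).toReal * PsiInv α LS k)) ≤ ENNReal.ofReal η := by
  set Y := fun ω => ⨆ k : {k : ℕ // 1 ≤ k},
    |X k ω| / (√2 * (gboNorm μ α L (X k)).toReal * PsiInv α LS k)
  have hP : ∀ k : {k : ℕ // 1 ≤ k}, 0 < PsiInv α LS k := fun k =>
    PsiInv_pos hLS (by exact_mod_cast k.2)
  have hdiv : ∀ (k : {k : ℕ // 1 ≤ k}) ω, |X k ω| / (√2 * (gboNorm μ α L (X k)).toReal *
      PsiInv α LS k) = |X k ω| / (gboNorm μ α L (X k)).toReal / (√2 * PsiInv α LS k) :=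
    fun _ _ => by ring
  have hY0 : 0 ≤ Y := fun ω => Real.iSup_nonneg fun k => by
    have := hP k
    positivity
  have hYm : Measurable Y := Measurable.iSup fun k => (hX k).abs.div_const _
  have htail : ∀ t, 1 / 2 < t →
      μ {ω | t < Psi α LO (Y ω / η)} ≤ ENNReal.ofReal (3 / 4 * ((1 + t) ^ 2)⁻¹) := by
    intro t ht
    have hs : 0 < η * PsiInv α LO t := mul_pos hη (PsiInv_pos hLO (by linarith))
    have hsub : {ω | t < Psi α LO (Y ω / η)} ⊆ ⋃ k : {k : ℕ // 1 ≤ k},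
        {ω | η * PsiInv α LO t < |X k ω| / (gboNorm μ α L (X k)).toReal / (√2 * PsiInv α LS k)} :=
      fun ω hω => by
        have hYω : η * PsiInv α LO t < Y ω := setOf_lt_Psi_div_subset hη (by linarith) hω
        obtain ⟨k, hk⟩ := exists_lt_of_lt_ciSup hYω
        exact mem_iUnion.2 ⟨k, show _ < _ from hdiv k ω ▸ hk⟩
    calc μ {ω | t < Psi α LO (Y ω / η)}
        ≤ ∑' k : {k : ℕ // 1 ≤ k}, μ {ω | η * PsiInv α LO t <
            |X k ω| / (gboNorm μ α L (X k)).toReal / (√2 * PsiInv α LS k)} :=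
          (measure_mono hsub).trans (measure_iUnion_le _)
      _ ≤ ∑' k : {k : ℕ // 1 ≤ k}, (ENNReal.ofReal ((1 + t) ^ 2 * (1 + k) ^ 2 - 1))⁻¹ :=
          ENNReal.tsum_le_tsum fun k => measure_lt_abs_div_gboNorm_div_le hα hL (hX k)
            (mul_pos (by positivity) (hP k)) hs (hkey t k ht (by exact_mod_cast k.2))
      _ ≤ ENNReal.ofReal (3 / 4 * ((1 + t) ^ 2)⁻¹) :=
          tsum_inv_ofReal_mul_sq_sub_one_le (by nlinarith)
  have hint := lintegral_ofReal_le_of_meas_lt_le (a := 1 / 2) (c := 3 / 4)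
    (fun ω => Psi_nonneg (Y ω / η)) ((monotone_Psi hLO).measurable.comp (hYm.div_const η))
    (by norm_num) (by norm_num) htail
  refine orliczNorm_le_ofReal hη (le_of_eq_of_le ?_ (hint.trans_eq ?_))
  · exact lintegral_congr fun ω => by rw [abs_of_nonneg (hY0 ω)]
  · norm_num

end Maximal

theorem gbo_ratio_maximal_general {Ω : Type*} [MeasurableSpace Ω] (μ : Measure Ω)
    [IsProbabilityMeasure μ] (α L : ℝ) (hα : 0 < α) (hL : 0 < L)
    (X : ℕ → Ω → ℝ) (hX : ∀ k, Measurable (X k)) :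
    gboNorm μ α
        ((((3 : ℝ) ^ (1 / α) / Real.sqrt 3) * max 1 ((2 : ℝ) ^ ((1 - α) / α))) * L)
        (fun ω => ⨆ k : {k : ℕ // 1 ≤ k},
          |X k ω| / (Real.sqrt 2 * (gboNorm μ α L (X k)).toReal *
            PsiInv α (((2 : ℝ) ^ (1 / α) * max 1 ((2 : ℝ) ^ ((1 - α) / α)) / 2) * L)
              ((k : ℕ) : ℝ)))
      ≤ ENNReal.ofReal (2.5 * (if α < 1 then 2 * Real.exp 1 * (4 / α) ^ (1 / α) else 1)) := by
  have hQ : (1 : ℝ) ≤ if α < 1 then 2 * Real.exp 1 * (4 / α) ^ (1 / α) else 1 := by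
    split_ifs with hα1
    · have h4 : 1 ≤ (4 / α) ^ (1 / α) :=
        Real.one_le_rpow (by rw [le_div_iff₀ hα]; linarith) (by positivity)
      nlinarith [Real.add_one_le_exp 1]
    · exact le_rfl
  exact gboNorm_iSup_div_le hα.le hL.le (by positivity) (by positivity) (by positivity) X hX
    fun t k ht hk => PsiInv_sq_mul_sq_sub_one_le hα hL.le hQ ht.le hk

/-- Sharper maximal inequality. For any sequence `X₁, X₂, …` with finite
GBO norms, the GBO norm (with parameter `c(α) M(α) L`) of
`sup_{k ≥ 1} |X_k| / (√2 ‖X_k‖_{Ψ_{α,L}} Ψ_{α,S(α)L}⁻¹(k))` is at most `2.5 Q_α`,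
where `M(α) = max{1, 2^{(1−α)/α}}`, `S(α) = 2^{1/α} M(α)/2`, `c(α) = 3^{1/α}/√3`,
and `Q_α = 2e(4/α)^{1/α}` if `α < 1`, `Q_α = 1` if `α ≥ 1`. -/
theorem gbo_ratio_maximal {Ω : Type*} [MeasurableSpace Ω] (μ : Measure Ω)
    [IsProbabilityMeasure μ] (α L : ℝ) (hα : 0 < α) (hL : 0 < L)
    (X : ℕ → Ω → ℝ) (hX : ∀ k, Measurable (X k))
    (hfin : ∀ k, 1 ≤ k → gboNorm μ α L (X k) ≠ ⊤) :
    gboNorm μ α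
        ((((3 : ℝ) ^ (1 / α) / Real.sqrt 3) * max 1 ((2 : ℝ) ^ ((1 - α) / α))) * L)
        (fun ω => ⨆ k : {k : ℕ // 1 ≤ k},
          |X k ω| / (Real.sqrt 2 * (gboNorm μ α L (X k)).toReal *
            PsiInv α (((2 : ℝ) ^ (1 / α) * max 1 ((2 : ℝ) ^ ((1 - α) / α)) / 2) * L)
              ((k : ℕ) : ℝ)))
      ≤ ENNReal.ofReal (2.5 * (if α < 1 then 2 * Real.exp 1 * (4 / α) ^ (1 / α) else 1)) :=
  gbo_ratio_maximal_general μ α L hα hL X hX
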